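/- Let D₁ and D₂ be closed symmetric densely defined operators on a Hilbert space H with Dom D₁ ∩ Dom D₂ dense, and let D be the reverse Wick rotation of (D₁, D₂). Then on Dom D₁ ∩ Dom D₂ the norms ‖·‖_{D,D*} and ‖·‖_{D₁,D₂} are equal: for all ψ ∈ Dom D₁ ∩ Dom D₂, ‖ψ‖² + ‖Dψ‖² + ‖D*ψ‖² = ‖ψ‖² + ‖D₁ψ‖² + ‖D₂ψ‖². -/

import Mathlib

/-!
With `α = (1 + i) / 2` the reverse Wick rotation is `D = α D₁ + ᾱ D₂` on `Dom D₁ ∩ Dom D₂`, so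
symmetry of `D₁` and `D₂` makes `ᾱ D₁ + α D₂` a formal adjoint of `D`, hence a restriction of `D*`.
Since the matrix `[[α, ᾱ], [ᾱ, α]]` is unitary, `(D₁ψ, D₂ψ) ↦ (Dψ, D*ψ)` preserves the sum of the
squared norms.
-/
open ComplexConjugate

namespace LinearPMap

variable {𝕜 E F : Type*} [RCLike 𝕜] [NormedAddCommGroup E] [InnerProductSpace 𝕜 E]
  [NormedAddCommGroup F] [InnerProductSpace 𝕜 F] {T T₁ T₂ : E →ₗ.[𝕜] F} {S S₁ S₂ : F →ₗ.[𝕜] E}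

theorem IsFormalAdjoint.smul (h : T.IsFormalAdjoint S) (c : 𝕜) :
    (c • T).IsFormalAdjoint (conj c • S) := fun x y => by
  simp only [smul_apply, inner_smul_left, inner_smul_right]
  exact congrArg _ (h x y)

theorem IsFormalAdjoint.add (h₁ : T₁.IsFormalAdjoint S₁) (h₂ : T₂.IsFormalAdjoint S₂) :
    (T₁ + T₂).IsFormalAdjoint (S₁ + S₂) := fun x y => by
  simp only [add_apply, inner_add_left, inner_add_right]
  exact congr($(h₁ ⟨x, x.2.1⟩ ⟨y, y.2.1⟩) + $(h₂ ⟨x, x.2.2⟩ ⟨y, y.2.2⟩))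

end LinearPMap

theorem norm_sq_add_norm_sq_wick {E : Type*} [NormedAddCommGroup E] [InnerProductSpace ℂ E]
    (a b : E) :
    ‖((1 + Complex.I) / 2) • a + ((1 - Complex.I) / 2) • b‖ ^ 2
      + ‖((1 - Complex.I) / 2) • a + ((1 + Complex.I) / 2) • b‖ ^ 2 = ‖a‖ ^ 2 + ‖b‖ ^ 2 := by
  set u : E := (1 / 2 : ℂ) • (a + b)
  set v : E := (Complex.I / 2) • (a - b)
  have hu : ‖u‖ = ‖a + b‖ / 2 := by rw [norm_smul]; simp; ring
  have hv : ‖v‖ = ‖a - b‖ / 2 := by rw [norm_smul]; simp; ring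
  have h_add : ((1 + Complex.I) / 2) • a + ((1 - Complex.I) / 2) • b = u + v := by
    simp only [u, v]; module
  have h_sub : ((1 - Complex.I) / 2) • a + ((1 + Complex.I) / 2) • b = u - v := by
    simp only [u, v]; module
  rw [h_add, h_sub, parallelogram_law_with_norm ℂ u v, hu, hv]
  linarith [parallelogram_law_with_norm ℂ a b]

theorem stmt_6_general {H : Type*} [NormedAddCommGroup H] [InnerProductSpace ℂ H] [CompleteSpace H]
    (D₁ D₂ D : H →ₗ.[ℂ] H)
    (h₁sym : ∀ x y : D₁.domain, (inner ℂ (D₁ x) (y : H) : ℂ) = inner ℂ (x : H) (D₁ y))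
    (h₂sym : ∀ x y : D₂.domain, (inner ℂ (D₂ x) (y : H) : ℂ) = inner ℂ (x : H) (D₂ y))
    (hdense : Dense ((D₁.domain ⊓ D₂.domain : Submodule ℂ H) : Set H))
    (hDdom : D.domain = D₁.domain ⊓ D₂.domain)
    (hDval : ∀ (x : H) (h1 : x ∈ D₁.domain) (h2 : x ∈ D₂.domain) (h : x ∈ D.domain),
      D ⟨x, h⟩ = ((1 : ℂ) / 2) • (D₁ ⟨x, h1⟩ + D₂ ⟨x, h2⟩)
        + (Complex.I / 2) • (D₁ ⟨x, h1⟩ - D₂ ⟨x, h2⟩)) :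
    ∀ (ψ : H) (h1 : ψ ∈ D₁.domain) (h2 : ψ ∈ D₂.domain),
      ∃ (hD : ψ ∈ D.domain) (hA : ψ ∈ D.adjoint.domain),
        ‖ψ‖ ^ 2 + ‖D ⟨ψ, hD⟩‖ ^ 2 + ‖D.adjoint ⟨ψ, hA⟩‖ ^ 2
          = ‖ψ‖ ^ 2 + ‖D₁ ⟨ψ, h1⟩‖ ^ 2 + ‖D₂ ⟨ψ, h2⟩‖ ^ 2 := by
  intro ψ h1 h2
  have hconj_plus : conj ((1 + Complex.I) / 2) = (1 - Complex.I) / 2 := by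
    simp [map_div₀, map_ofNat, sub_eq_add_neg]
  have hconj_minus : conj ((1 - Complex.I) / 2) = (1 + Complex.I) / 2 := by
    simp [map_div₀, map_ofNat]
  have hD_apply : ∀ (x : H) (hx : x ∈ D.domain) (hx' : x ∈ D₁.domain ⊓ D₂.domain),
      D ⟨x, hx⟩
        = ((1 + Complex.I) / 2) • D₁ ⟨x, hx'.1⟩ + ((1 - Complex.I) / 2) • D₂ ⟨x, hx'.2⟩ := by
    intro x hx hx'
    rw [hDval x hx'.1 hx'.2 hx]
    module
  have hD : D = ((1 + Complex.I) / 2) • D₁ + ((1 - Complex.I) / 2) • D₂ :=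
    LinearPMap.ext hDdom fun x hx hx' => hD_apply x hx hx'
  have hD_adj : ((1 - Complex.I) / 2) • D₁ + ((1 + Complex.I) / 2) • D₂ ≤ D.adjoint := by
    refine LinearPMap.IsFormalAdjoint.le_adjoint (hDdom ▸ hdense) ?_
    have h₁ : D₁.IsFormalAdjoint D₁ := h₁sym
    have h₂ : D₂.IsFormalAdjoint D₂ := h₂sym
    have := (h₁.smul ((1 + Complex.I) / 2)).add (h₂.smul ((1 - Complex.I) / 2))
    rwa [← hD, hconj_plus, hconj_minus] at this
  have hψ : ψ ∈ (((1 - Complex.I) / 2) • D₁ + ((1 + Complex.I) / 2) • D₂).domain := ⟨h1, h2⟩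
  refine ⟨hDdom ▸ hψ, hD_adj.1 hψ, ?_⟩
  rw [← hD_adj.2 (x := ⟨ψ, hψ⟩) rfl, hD_apply ψ _ hψ, LinearPMap.add_apply]
  simp only [LinearPMap.smul_apply]
  rw [add_assoc, add_assoc, norm_sq_add_norm_sq_wick]

/-- For the reverse Wick rotation `D` of `(D₁, D₂)`, the combined graph norms
`‖·‖_{D,D*}` and `‖·‖_{D₁,D₂}` agree on `Dom D₁ ∩ Dom D₂`. -/
theorem stmt_6 {H : Type*} [NormedAddCommGroup H] [InnerProductSpace ℂ H] [CompleteSpace H]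
    (D₁ D₂ D : H →ₗ.[ℂ] H) (h₁c : D₁.IsClosed) (h₂c : D₂.IsClosed)
    (h₁dense : Dense (D₁.domain : Set H)) (h₂dense : Dense (D₂.domain : Set H))
    (h₁sym : ∀ x y : D₁.domain, (inner ℂ (D₁ x) (y : H) : ℂ) = inner ℂ (x : H) (D₁ y))
    (h₂sym : ∀ x y : D₂.domain, (inner ℂ (D₂ x) (y : H) : ℂ) = inner ℂ (x : H) (D₂ y))
    (hdense : Dense ((D₁.domain ⊓ D₂.domain : Submodule ℂ H) : Set H))
    (hDdom : D.domain = D₁.domain ⊓ D₂.domain)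
    (hDval : ∀ (x : H) (h1 : x ∈ D₁.domain) (h2 : x ∈ D₂.domain) (h : x ∈ D.domain),
      D ⟨x, h⟩ = ((1 : ℂ) / 2) • (D₁ ⟨x, h1⟩ + D₂ ⟨x, h2⟩)
        + (Complex.I / 2) • (D₁ ⟨x, h1⟩ - D₂ ⟨x, h2⟩)) :
    ∀ (ψ : H) (h1 : ψ ∈ D₁.domain) (h2 : ψ ∈ D₂.domain),
      ∃ (hD : ψ ∈ D.domain) (hA : ψ ∈ D.adjoint.domain),
        ‖ψ‖ ^ 2 + ‖D ⟨ψ, hD⟩‖ ^ 2 + ‖D.adjoint ⟨ψ, hA⟩‖ ^ 2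
          = ‖ψ‖ ^ 2 + ‖D₁ ⟨ψ, h1⟩‖ ^ 2 + ‖D₂ ⟨ψ, h2⟩‖ ^ 2 :=
  stmt_6_general D₁ D₂ D h₁sym h₂sym hdense hDdom hDval
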